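/- arXiv:2103.12034 — 4 statements merged into one kernel-verified Lean document; each statement's English description precedes it below -/
import Mathlib

section
/- Let n ≥ 1 and let λ be the line-graph operator on periodic binary sequences of period n. Then the n-fold iterate λ^n sends every periodic binary sequence of period n to the zero sequence if and only if n is a power of 2 (i.e., there exists k ∈ ℕ with n = 2^k). -/
/-!
Writing `σ` for the cyclic shift `(σ a) i = a (i + 1)`, the operator `λ` is `σ + 1`, so
`λ^n = ∑ j ≤ n, (n choose j) σ^j` over `𝔽₂`. As `σ^n = 1`, the terms `j = 0` and `j = n` cancel,
and testing on indicator sequences shows that `λ^n = 0` exactly when `n choose j` is even for all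
`0 < j < n`. By Lucas's theorem this characterises the powers of `2`.
-/

/-- The line-graph operator on periodic binary sequences of period `n`:
`(lineOp n a) i = a i + a (i + 1)`. -/
def lineOp (n : ℕ) (a : ZMod n → ZMod 2) : ZMod n → ZMod 2 :=
  fun i => a i + a (i + 1)

open Finset

section

variable {n : ℕ}

abbrev cyclicShift (n : ℕ) : Module.End (ZMod 2) (ZMod n → ZMod 2) :=
  LinearMap.funLeft (ZMod 2) (ZMod 2) (· + 1)

lemma cyclicShift_pow_apply (j : ℕ) (a : ZMod n → ZMod 2) (i : ZMod n) :
    (cyclicShift n ^ j) a i = a (i + j) := by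
  induction j generalizing i with
  | zero => simp
  | succ j ih =>
    rw [pow_succ', Module.End.mul_apply, LinearMap.funLeft_apply, ih]
    push_cast
    ring_nf

lemma lineOp_eq_cyclicShift_add_one : lineOp n = ⇑(cyclicShift n + 1) := by
  funext a i
  exact add_comm _ _

lemma lineOp_iterate_apply (k : ℕ) (a : ZMod n → ZMod 2) (i : ZMod n) :
    (lineOp n)^[k] a i = ∑ j ∈ range (k + 1), (k.choose j : ZMod 2) * a (i + j) := by
  rw [lineOp_eq_cyclicShift_add_one, ← Module.End.coe_pow, (Commute.one_right _).add_pow]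
  simp [LinearMap.sum_apply, cyclicShift_pow_apply]

lemma lineOp_iterate_self_apply (hn : n ≠ 0) (a : ZMod n → ZMod 2) (i : ZMod n) :
    (lineOp n)^[n] a i = ∑ j ∈ Ioo 0 n, (n.choose j : ZMod 2) * a (i + j) := by
  rw [lineOp_iterate_apply, sum_range_succ, range_eq_Ico,
    sum_eq_sum_Ico_succ_bot (Nat.pos_of_ne_zero hn), Ico_add_one_left_eq_Ioo]
  simp [add_right_comm _ _ (a i), CharTwo.add_self_eq_zero]

lemma forall_lineOp_iterate_self_eq_zero_iff (hn : n ≠ 0) :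
    (∀ a : ZMod n → ZMod 2, (lineOp n)^[n] a = 0) ↔ ∀ r ∈ Ioo 0 n, n.choose r ≡ 0 [MOD 2] := by
  simp_rw [← ZMod.natCast_eq_natCast_iff, Nat.cast_zero]
  constructor
  · intro h r hr
    have hsum := congrFun (h (Pi.single (r : ZMod n) 1)) 0
    rw [lineOp_iterate_self_apply hn, sum_eq_single_of_mem r hr] at hsum
    · simpa using hsum
    · intro j hj hjr
      have hcast : (j : ZMod n) ≠ r := by
        rw [Ne, ZMod.natCast_eq_natCast_iff', Nat.mod_eq_of_lt (mem_Ioo.1 hj).2,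
          Nat.mod_eq_of_lt (mem_Ioo.1 hr).2]
        exact hjr
      simp [hcast]
  · intro h a
    funext i
    rw [lineOp_iterate_self_apply hn]
    exact sum_eq_zero fun j hj => by simp [h j hj]

end

theorem lineOp_iterate_n_eq_zero_iff_pow_two (n : ℕ) (hn : 1 ≤ n) :
    (∀ a : ZMod n → ZMod 2, (lineOp n)^[n] a = 0) ↔ ∃ k : ℕ, n = 2 ^ k := by
  rw [forall_lineOp_iterate_self_eq_zero_iff (by omega)]
  constructor
  · intro h
    exact ⟨_, Choose.eq_pow_multiplicity_of_choose_modEq_zero_nat hn fun i hi =>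
      h i (by simp only [mem_Icc, mem_Ioo] at hi ⊢; omega)⟩
  · rintro ⟨k, rfl⟩ r hr
    exact Nat.modEq_zero_iff_dvd.2 <|
      Nat.prime_two.dvd_choose_pow (mem_Ioo.1 hr).1.ne' (mem_Ioo.1 hr).2.ne
end

section
/- Let n ≥ 1 and let λ be the line-graph operator on periodic binary sequences of period n. Then every periodic binary sequence of period n eventually terminates at the zero sequence (i.e., for every a : ZMod n → ZMod 2 there exists k ∈ ℕ with λ^k a = 0) if and only if n is a power of 2. -/
section

variable {n : ℕ}

@[simp]
lemma lineOp_zero : lineOp n 0 = 0 := by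
  funext i
  simp [lineOp]

lemma lineOp_iterate_eq_zero_of_le {a : ZMod n → ZMod 2} {k m : ℕ} (hkm : k ≤ m)
    (h : (lineOp n)^[k] a = 0) : (lineOp n)^[m] a = 0 := by
  obtain ⟨d, rfl⟩ := Nat.exists_eq_add_of_le' hkm
  rw [Function.iterate_add_apply, h, Function.iterate_fixed lineOp_zero]

lemma lineOp_iterate_two_pow_apply (j : ℕ) (a : ZMod n → ZMod 2) (i : ZMod n) :
    (lineOp n)^[2 ^ j] a i = a i + a (i + 2 ^ j) := by
  induction j generalizing a i with
  | zero => simp [lineOp]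
  | succ j ih =>
    rw [pow_succ, mul_two, Function.iterate_add_apply, ih, ih, ih, pow_succ, mul_two,
      add_assoc i]
    linear_combination (CharTwo.add_self_eq_zero (a (i + 2 ^ j)))

lemma lineOp_iterate_two_pow_eq_zero_iff {j : ℕ} {a : ZMod n → ZMod 2} :
    (lineOp n)^[2 ^ j] a = 0 ↔ ∀ i, a (i + 2 ^ j) = a i := by
  simp only [funext_iff, lineOp_iterate_two_pow_apply, Pi.zero_apply, CharTwo.add_eq_zero,
    eq_comm]

end

theorem lineOp_eventually_zero_iff_pow_two_general (n : ℕ) :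
    (∀ a : ZMod n → ZMod 2, ∃ k : ℕ, (lineOp n)^[k] a = 0) ↔ ∃ k : ℕ, n = 2 ^ k := by
  constructor
  · intro h
    obtain ⟨k, hk⟩ := h (Pi.single 0 1)
    have hperiodic := lineOp_iterate_two_pow_eq_zero_iff.mp
      (lineOp_iterate_eq_zero_of_le Nat.lt_two_pow_self.le hk) 0
    have hvanish : (2 : ZMod n) ^ k = 0 := by simpa [Pi.single_apply] using hperiodic
    obtain ⟨j, -, hj⟩ := (Nat.dvd_prime_pow Nat.prime_two).mp
      ((ZMod.natCast_eq_zero_iff _ _).mp (mod_cast hvanish))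
    exact ⟨j, hj⟩
  · rintro ⟨k, rfl⟩ a
    refine ⟨2 ^ k, lineOp_iterate_two_pow_eq_zero_iff.mpr fun i => ?_⟩
    have hvanish : (2 : ZMod (2 ^ k)) ^ k = 0 := mod_cast ZMod.natCast_self (2 ^ k)
    rw [hvanish, add_zero]

theorem lineOp_eventually_zero_iff_pow_two (n : ℕ) (hn : 1 ≤ n) :
    (∀ a : ZMod n → ZMod 2, ∃ k : ℕ, (lineOp n)^[k] a = 0) ↔ ∃ k : ℕ, n = 2 ^ k :=
  lineOp_eventually_zero_iff_pow_two_general n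
end

section
/- Let n ≥ 1, let λ be the line-graph operator on periodic binary sequences of period n, and let b : ZMod n → ZMod 2. Then there exists a : ZMod n → ZMod 2 with λ a = b if and only if ∑_{i ∈ ZMod n} b i = 0 in ZMod 2. (In spin language: a configuration of interactions arises from a spin configuration, i.e., is unfrustrated, exactly when it contains an even number of 1's.) -/
open Finset

namespace ZMod

variable {n : ℕ} [NeZero n] {M : Type*} [AddCommGroup M]

theorem sum_eq_sum_range (f : ZMod n → M) : ∑ i, f i = ∑ k ∈ range n, f k :=
  sum_nbij' val (↑) (fun i _ ↦ mem_range.2 i.val_lt) (fun _ _ ↦ mem_univ _)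
    (fun i _ ↦ natCast_zmod_val i) (fun _ hk ↦ val_cast_of_lt (mem_range.1 hk))
    (fun i _ ↦ by rw [natCast_zmod_val])

theorem sum_add_one_sub_eq_zero (a : ZMod n → M) : ∑ i, (a (i + 1) - a i) = 0 := by
  rw [sum_sub_distrib, ← Equiv.sum_comp (Equiv.addRight 1) a]
  exact sub_self _

theorem periodic_sum_range_of_sum_eq_zero {b : ZMod n → M} (hb : ∑ i, b i = 0) :
    Function.Periodic (fun k ↦ ∑ j ∈ range k, b j) n := fun k ↦ by
  simp only [add_comm k, sum_range_add, ← sum_eq_sum_range, hb, zero_add, Nat.cast_add,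
    natCast_self]

theorem exists_add_one_sub_eq_iff_sum_eq_zero (b : ZMod n → M) :
    (∃ a : ZMod n → M, ∀ i, a (i + 1) - a i = b i) ↔ ∑ i, b i = 0 := by
  refine ⟨fun ⟨a, ha⟩ ↦ by simpa only [ha] using sum_add_one_sub_eq_zero a, fun hb ↦ ?_⟩
  set S : ℕ → M := fun k ↦ ∑ j ∈ range k, b j
  have hS : ∀ k : ℕ, S (k : ZMod n).val = S k := fun k ↦ by
    rw [val_natCast]
    exact (periodic_sum_range_of_sum_eq_zero hb).map_mod_nat k
  refine ⟨fun i ↦ S i.val, fun i ↦ ?_⟩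
  have hsucc : i + 1 = ((i.val + 1 : ℕ) : ZMod n) := by
    push_cast
    rw [natCast_zmod_val]
  simp only [hsucc, hS, S, sum_range_succ, natCast_zmod_val, add_sub_cancel_left]

end ZMod

theorem mem_range_lineOp_iff_sum_eq_zero (n : ℕ) [NeZero n] (b : ZMod n → ZMod 2) :
    (∃ a : ZMod n → ZMod 2, lineOp n a = b) ↔ ∑ i : ZMod n, b i = 0 := by
  rw [← ZMod.exists_add_one_sub_eq_iff_sum_eq_zero]
  simp only [funext_iff, lineOp, CharTwo.sub_eq_add, add_comm]
end

section
/- Let n ≥ 1 and suppose n is a power of 2 (n = 2^k for some k ∈ ℕ). If a : ZMod n → ZMod 2 satisfies λ a = fun i => a (i + s) for some s ∈ ZMod n (i.e., the equivalence class of a under rotations is a fixed point of λ), then a = 0. In other words, when the period is a power of 2, the only eigensequence of the line-graph operator is the trivial sequence. -/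
section

variable {n : ℕ}

lemma lineOp_rotate (a : ZMod n → ZMod 2) (c : ZMod n) :
    lineOp n (fun i => a (i + c)) = fun i => lineOp n a (i + c) := by
  funext i
  simp only [lineOp, add_right_comm]

lemma lineOp_iterate_two_pow (t : ℕ) (a : ZMod n → ZMod 2) :
    (lineOp n)^[2 ^ t] a = fun i => a i + a (i + (2 ^ t : ℕ)) := by
  induction t generalizing a with
  | zero => funext i; simp [lineOp]
  | succ t ih =>
    rw [pow_succ, mul_two, Function.iterate_add_apply, ih, ih]
    funext i
    dsimp only
    rw [Nat.cast_add, ← add_assoc i, add_assoc, CharTwo.add_cancel_left]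

lemma lineOp_iterate_self_of_eq_two_pow {k : ℕ} (hk : n = 2 ^ k) (a : ZMod n → ZMod 2) :
    (lineOp n)^[n] a = 0 := by
  have hself := lineOp_iterate_two_pow k a
  rw [← hk, ZMod.natCast_self] at hself
  funext i
  simp [hself, CharTwo.add_self_eq_zero]

lemma lineOp_iterate_of_eq_rotate {a : ZMod n → ZMod 2} {s : ZMod n}
    (h : lineOp n a = fun i => a (i + s)) (m : ℕ) :
    (lineOp n)^[m] a = fun i => a (i + m • s) := by
  induction m with
  | zero => simp
  | succ m ih =>
    rw [Function.iterate_succ_apply', ih, lineOp_rotate, h]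
    simp only [succ_nsmul, add_assoc]

end

theorem eigensequence_trivial_of_pow_two_general (n : ℕ) (k : ℕ) (hk : n = 2 ^ k)
    (a : ZMod n → ZMod 2) (s : ZMod n) (h : lineOp n a = fun i => a (i + s)) :
    a = 0 := by
  have hrot := lineOp_iterate_of_eq_rotate h n
  rw [lineOp_iterate_self_of_eq_two_pow hk, nsmul_eq_mul, ZMod.natCast_self, zero_mul] at hrot
  simpa using hrot.symm

theorem eigensequence_trivial_of_pow_two (n : ℕ) (hn : 1 ≤ n) (k : ℕ) (hk : n = 2 ^ k)
    (a : ZMod n → ZMod 2) (s : ZMod n) (h : lineOp n a = fun i => a (i + s)) :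
    a = 0 :=
  eigensequence_trivial_of_pow_two_general n k hk a s h
end
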